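/- Let d be a natural number. Then, as identities of rational numbers, ∑_{0 < k ≤ d} (k − 2/3) · C_{d−k} + (1/3)·∑_{j=1}^{d+1} j·C_{d,j} = ∑_{1 ≤ j ≤ d+1, j ≡ 1 (mod 3)} j·C_{d,j} − d + 2/3, and this common value also equals ∑_{1 ≤ j ≤ d+1, j ≡ 2 (mod 3)} j·C_{d,j} + 2d − 1/3. -/

import Mathlib

/-
Write `χ = chi3` for the character modulo 3 and `S_d = ∑_{m<d} C_m`. Pascal's rule gives
`C_{d+1,j} = C_{d,j-1} + 2 C_{d,j} + C_{d,j+1}`, and summation by parts moves this operator onto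
the weight: `∑_{j≥1} g(j) C_{d+1,j} = ∑_{j≥1} (g(j-1) + 2 g(j) + g(j+1)) C_{d,j}` plus boundary
terms in `C_{d,0} = 2 C_d` and `C_{d,1} = C_{d+1} - 2 C_d`. Since `χ(a-1) + χ(a) + χ(a+1) = 0`, the
span of the weights `χ(j)`, `χ(j-1)`, `j χ(j)`, `j χ(j-1)` is stable, and induction on `d` yields
`∑ j χ(j) C_{d,j} = 3d - 1` and `∑ j χ(j-1) C_{d,j} = 3 ∑_{k=1}^d (k - 2/3) C_{d-k} - 3d`.
Both claims follow from `3 [j ≡ 1] = 1 + 2 χ(j) + χ(j-1)` and `3 [j ≡ 2] = 1 - χ(j) + χ(j-1)`.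
-/

/-- `chi3 a` is the Legendre symbol `(a/3)`: the unique element of `{0, 1, -1}`
congruent to `a` modulo `3`. -/
def chi3 (a : ℤ) : ℤ := if a % 3 = 0 then 0 else if a % 3 = 1 then 1 else -1

/-- `chooseN a b` is the binomial coefficient `binom(a, b)` with natural upper argument
and integer lower argument; it is `0` when `b < 0` or `b > a`. -/
def chooseN (a : ℕ) (b : ℤ) : ℤ := if 0 ≤ b then (a.choose b.toNat : ℤ) else 0

/-- The generalized Catalan-type numbers
`C_{n,j} = 2·binom(2n, n−j) − binom(2n, n−1−j) − binom(2n, n+1−j)`. -/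
def catD (n j : ℕ) : ℤ :=
  2 * chooseN (2 * n) ((n : ℤ) - j) - chooseN (2 * n) ((n : ℤ) - 1 - j)
    - chooseN (2 * n) ((n : ℤ) + 1 - j)

open Finset

lemma chooseN_natCast (a k : ℕ) : chooseN a k = a.choose k := by
  simp [chooseN]

lemma chooseN_of_neg (a : ℕ) {b : ℤ} (hb : b < 0) : chooseN a b = 0 := by
  simp [chooseN, hb.not_ge]

lemma chooseN_succ (a : ℕ) (b : ℤ) : chooseN (a + 1) b = chooseN a (b - 1) + chooseN a b := by
  rcases lt_trichotomy b 0 with hb | rfl | hb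
  · simp [chooseN_of_neg _ hb, chooseN_of_neg _ (show b - 1 < 0 by omega)]
  · simp [chooseN]
  · lift b - 1 to ℕ using (by omega) with k hk
    rw [show b = k + 1 by omega, ← Nat.cast_succ, chooseN_natCast, chooseN_natCast,
      chooseN_natCast, Nat.choose_succ_succ', Nat.cast_add]

lemma chooseN_symm (a : ℕ) (b : ℤ) : chooseN a (a - b) = chooseN a b := by
  rcases lt_or_ge b 0 with hb | hb
  · rw [chooseN_of_neg _ hb]
    lift a - b to ℕ using (by omega) with k hk
    rw [chooseN_natCast, Nat.choose_eq_zero_of_lt (by omega), Nat.cast_zero]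
  · lift b to ℕ using hb with k
    rcases le_or_gt k a with hk | hk
    · rw [← Nat.cast_sub hk, chooseN_natCast, chooseN_natCast, Nat.choose_symm hk]
    · rw [chooseN_of_neg _ (by omega), chooseN_natCast, Nat.choose_eq_zero_of_lt hk,
        Nat.cast_zero]

lemma catD_succ (d j : ℕ) :
    catD (d + 1) (j + 1) = catD d j + 2 * catD d (j + 1) + catD d (j + 2) := by
  simp only [catD, show 2 * (d + 1) = 2 * d + 1 + 1 by ring, chooseN_succ]
  push_cast
  ring_nf

lemma catD_succ_zero (d : ℕ) : catD (d + 1) 0 = 2 * catD d 0 + 2 * catD d 1 := by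
  have h1 := chooseN_symm (2 * d) (d - 1)
  have h2 := chooseN_symm (2 * d) (d - 2)
  simp only [catD, show 2 * (d + 1) = 2 * d + 1 + 1 by ring, chooseN_succ]
  push_cast at h1 h2 ⊢
  ring_nf at h1 h2 ⊢
  linear_combination 2 * h1 - h2

lemma catD_eq_zero (d j : ℕ) (h : d + 2 ≤ j) : catD d j = 0 := by
  simp only [catD]
  rw [chooseN_of_neg _ (by omega), chooseN_of_neg _ (by omega), chooseN_of_neg _ (by omega)]
  ring

lemma catalan_eq_choose_sub_choose (n : ℕ) :
    (catalan n : ℤ) = (2 * n).choose n - (2 * n).choose (n + 1) := by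
  have hc : ((n + 1 : ℕ) : ℤ) * catalan n = (2 * n).choose n := by
    exact_mod_cast succ_mul_catalan_eq_centralBinom n
  have hs : ((2 * n).choose (n + 1) : ℤ) * (n + 1) = (2 * n).choose n * n := by
    have := Nat.choose_succ_right_eq (2 * n) n
    rw [show 2 * n - n = n by omega] at this
    exact_mod_cast this
  apply mul_left_cancel₀ (show ((n + 1 : ℕ) : ℤ) ≠ 0 by positivity)
  push_cast at hc ⊢
  linear_combination hc + hs

lemma catD_zero (n : ℕ) : catD n 0 = 2 * catalan n := by
  have h := chooseN_symm (2 * n) (n - 1)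
  rw [catalan_eq_choose_sub_choose, ← chooseN_natCast, ← chooseN_natCast]
  simp only [catD]
  push_cast at h ⊢
  ring_nf at h ⊢
  linear_combination h

lemma catD_one (n : ℕ) : catD n 1 = catalan (n + 1) - 2 * catalan n := by
  have := catD_succ_zero n
  rw [catD_zero, catD_zero] at this
  linarith

theorem sum_range_mul_threeTerm {R : Type*} [CommRing R] (f c : ℕ → R) (n : ℕ) :
    ∑ j ∈ range n, f (j + 1) * (c j + 2 * c (j + 1) + c (j + 2))
      = ∑ j ∈ range n, (f j + 2 * f (j + 1) + f (j + 2)) * c (j + 1)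
        + (f 1 * c 0 - f 0 * c 1) + (f n * c (n + 1) - f (n + 1) * c n) := by
  induction n with
  | zero => simp
  | succ n ih => rw [sum_range_succ, sum_range_succ, ih]; ring

def catDSum (g : ℤ → ℚ) (d : ℕ) : ℚ := ∑ j ∈ Icc 1 (d + 1), g j * catD d j

lemma catDSum_eq_sum_range (g : ℤ → ℚ) (d n : ℕ) (hn : d + 1 ≤ n) :
    catDSum g d = ∑ j ∈ range n, g (j + 1) * catD d (j + 1) := by
  obtain ⟨k, rfl⟩ := Nat.exists_eq_add_of_le hn
  rw [sum_range_add, sum_eq_zero (s := range k) fun i _ => by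
      rw [catD_eq_zero d _ (by omega), Int.cast_zero, mul_zero],
    add_zero, catDSum, ← Ico_add_one_right_eq_Icc, sum_Ico_eq_sum_range, add_tsub_cancel_right]
  exact sum_congr rfl fun i _ => by push_cast; rw [add_comm 1, add_comm 1]

lemma catDSum_add (f g : ℤ → ℚ) (d : ℕ) :
    catDSum (fun a => f a + g a) d = catDSum f d + catDSum g d := by
  simp only [catDSum, add_mul, sum_add_distrib]

lemma catDSum_sub (f g : ℤ → ℚ) (d : ℕ) :
    catDSum (fun a => f a - g a) d = catDSum f d - catDSum g d := by
  simp only [catDSum, sub_mul, sum_sub_distrib]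

lemma catDSum_const_mul (c : ℚ) (f : ℤ → ℚ) (d : ℕ) :
    catDSum (fun a => c * f a) d = c * catDSum f d := by
  simp only [catDSum, mul_assoc, mul_sum]

lemma catDSum_succ (g : ℤ → ℚ) (d : ℕ) :
    catDSum g (d + 1) = catDSum (fun a => g (a - 1) + 2 * g a + g (a + 1)) d
      + (2 * g 1 * catalan d - g 0 * (catalan (d + 1) - 2 * catalan d)) := by
  have green := sum_range_mul_threeTerm (fun j : ℕ => g j) (fun j => (catD d j : ℚ)) (d + 2)
  rw [catD_eq_zero d (d + 2) le_rfl, catD_eq_zero d (d + 3) (by omega), catD_zero, catD_one]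
    at green
  rw [catDSum_eq_sum_range _ _ (d + 2) le_rfl, catDSum_eq_sum_range _ _ (d + 2) (by omega)]
  simp only [catD_succ, Int.cast_add, Int.cast_mul, Int.cast_ofNat, add_sub_cancel_right,
    add_assoc, one_add_one_eq_two]
  push_cast [add_assoc] at green
  rw [green]
  ring

lemma chi3_sub_one_add_add_one (a : ℤ) : (chi3 (a - 1) : ℚ) + chi3 a + chi3 (a + 1) = 0 := by
  exact_mod_cast show chi3 (a - 1) + chi3 a + chi3 (a + 1) = 0 by unfold chi3; split_ifs <;> omega

lemma chi3_zero : chi3 0 = 0 := rfl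

lemma chi3_one : chi3 1 = 1 := rfl

lemma chi3_neg_one : chi3 (-1) = -1 := rfl

lemma catDSum_zero (g : ℤ → ℚ) : catDSum g 0 = -g 1 := by
  simp [catDSum, catD_one]

lemma catDSum_chi3 (d : ℕ) :
    catDSum (fun a => chi3 a) d = 2 * ∑ m ∈ range d, (catalan m : ℚ) - 1 := by
  induction d with
  | zero => simp [catDSum_zero, chi3]
  | succ d ih =>
    have hχ (a : ℤ) : (chi3 (a - 1) : ℚ) + 2 * chi3 a + chi3 (a + 1) = chi3 a := by
      linear_combination chi3_sub_one_add_add_one a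
    simp only [catDSum_succ, hχ, ih, sum_range_succ]
    rw [chi3_zero, chi3_one]
    push_cast
    ring

lemma catDSum_chi3_sub_one (d : ℕ) :
    catDSum (fun a => chi3 (a - 1)) d = catalan d - ∑ m ∈ range d, (catalan m : ℚ) - 1 := by
  induction d with
  | zero => simp [catDSum_zero, chi3]
  | succ d ih =>
    have hφ (a : ℤ) :
        (chi3 (a - 1 - 1) : ℚ) + 2 * chi3 (a - 1) + chi3 (a + 1 - 1) = chi3 (a - 1) := by
      have := chi3_sub_one_add_add_one (a - 1)
      rw [sub_add_cancel] at this
      rw [add_sub_cancel_right]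
      linear_combination this
    simp only [catDSum_succ, hφ, ih, sum_range_succ]
    rw [sub_self, zero_sub, chi3_zero, chi3_neg_one]
    push_cast
    ring

lemma catDSum_mul_chi3 (d : ℕ) : catDSum (fun a => a * chi3 a) d = 3 * d - 1 := by
  induction d with
  | zero => simp [catDSum_zero, chi3]
  | succ d ih =>
    have h (a : ℤ) : ((a - 1 : ℤ) : ℚ) * chi3 (a - 1) + 2 * (a * chi3 a)
        + ((a + 1 : ℤ) : ℚ) * chi3 (a + 1) = a * chi3 a - chi3 a - 2 * chi3 (a - 1) := by
      push_cast
      linear_combination ((a : ℚ) + 1) * chi3_sub_one_add_add_one a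
    simp only [catDSum_succ, h, catDSum_sub, catDSum_const_mul, ih, catDSum_chi3,
      catDSum_chi3_sub_one]
    rw [chi3_one]
    push_cast
    ring

lemma catDSum_mul_chi3_sub_one (d : ℕ) :
    catDSum (fun a => a * chi3 (a - 1)) d
      = 3 * ∑ m ∈ range d, ((d : ℚ) - m - 2 / 3) * catalan m - 3 * d := by
  induction d with
  | zero => simp [catDSum_zero, chi3]
  | succ d ih =>
    have h (a : ℤ) : ((a - 1 : ℤ) : ℚ) * chi3 (a - 1 - 1) + 2 * (a * chi3 (a - 1))
        + ((a + 1 : ℤ) : ℚ) * chi3 (a + 1 - 1)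
          = a * chi3 (a - 1) + 2 * chi3 a + chi3 (a - 1) := by
      have := chi3_sub_one_add_add_one (a - 1)
      rw [sub_add_cancel] at this
      push_cast
      rw [add_sub_cancel_right]
      linear_combination ((a : ℚ) - 1) * this
    have hshift (m : ℕ) : (((d + 1 : ℕ) : ℚ) - m - 2 / 3) * catalan m
        = ((d : ℚ) - m - 2 / 3) * catalan m + catalan m := by push_cast; ring
    simp only [catDSum_succ, h, catDSum_add, catDSum_const_mul, ih, catDSum_chi3,
      catDSum_chi3_sub_one, sum_range_succ _ d, hshift, sum_add_distrib]
    rw [sub_self, chi3_zero]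
    push_cast
    ring

lemma sum_Icc_mul_catalan_sub (d : ℕ) :
    ∑ k ∈ Icc 1 d, ((k : ℚ) - 2 / 3) * catalan (d - k)
      = ∑ m ∈ range d, ((d : ℚ) - m - 2 / 3) * catalan m := by
  apply sum_nbij' (fun k => d - k) (fun m => d - m)
  · intro k hk; simp only [mem_Icc, mem_range] at hk ⊢; omega
  · intro m hm; simp only [mem_Icc, mem_range] at hm ⊢; omega
  · intro k hk; simp only [mem_Icc] at hk; omega
  · intro m hm; simp only [mem_range] at hm; omega
  · intro k hk
    simp only [mem_Icc] at hk
    rw [Nat.cast_sub hk.2]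
    ring

lemma three_mul_ite_mod_three_eq_one (a : ℤ) :
    3 * (if a % 3 = 1 then (a : ℚ) else 0) = a + 2 * (a * chi3 a) + a * chi3 (a - 1) := by
  unfold chi3; push_cast; split_ifs <;> first | omega | ring

lemma three_mul_ite_mod_three_eq_two (a : ℤ) :
    3 * (if a % 3 = 2 then (a : ℚ) else 0) = a - a * chi3 a + a * chi3 (a - 1) := by
  unfold chi3; push_cast; split_ifs <;> first | omega | ring

lemma sum_filter_mod_three_eq (d r : ℕ) :
    ∑ j ∈ (Icc 1 (d + 1)).filter (fun j => j % 3 = r), (j : ℚ) * catD d j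
      = catDSum (fun a => if a % 3 = r then (a : ℚ) else 0) d := by
  rw [sum_filter, catDSum]
  refine sum_congr rfl fun j _ => ?_
  simp only [Int.cast_natCast]
  split_ifs <;> first | omega | simp

theorem catalan_weighted_recurrence (d : ℕ) :
    (∑ k ∈ Finset.Icc 1 d, ((k : ℚ) - 2 / 3) * (catalan (d - k) : ℚ)
        + (1 / 3) * ∑ j ∈ Finset.Icc 1 (d + 1), (j : ℚ) * (catD d j : ℚ)
      = (∑ j ∈ (Finset.Icc 1 (d + 1)).filter (fun j => j % 3 = 1),
            (j : ℚ) * (catD d j : ℚ)) - d + 2 / 3)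
    ∧ ∑ k ∈ Finset.Icc 1 d, ((k : ℚ) - 2 / 3) * (catalan (d - k) : ℚ)
        + (1 / 3) * ∑ j ∈ Finset.Icc 1 (d + 1), (j : ℚ) * (catD d j : ℚ)
      = (∑ j ∈ (Finset.Icc 1 (d + 1)).filter (fun j => j % 3 = 2),
            (j : ℚ) * (catD d j : ℚ)) + 2 * d - 1 / 3 := by
  have hT : ∑ j ∈ Icc 1 (d + 1), (j : ℚ) * catD d j = catDSum (fun a => a) d := by
    simp [catDSum]
  have h1 := catDSum_const_mul 3 (fun a => if a % 3 = 1 then (a : ℚ) else 0) d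
  have h2 := catDSum_const_mul 3 (fun a => if a % 3 = 2 then (a : ℚ) else 0) d
  simp only [three_mul_ite_mod_three_eq_one, three_mul_ite_mod_three_eq_two, catDSum_add,
    catDSum_sub, catDSum_const_mul, catDSum_mul_chi3, catDSum_mul_chi3_sub_one] at h1 h2
  rw [sum_filter_mod_three_eq, sum_filter_mod_three_eq, hT, sum_Icc_mul_catalan_sub]
  constructor <;> linarith
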